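/- Completeness of the coherent forcing models for generalized geometric implications: if T is a coherent theory (without equality), ⊩ the forcing relation of the coverage ◁_T on conditions (with renamings, variable substitutions, or term substitutions), φ a generalized geometric implication with variables in Y, (X;A) a condition, and ρ : Y → Tm(X) an environment, then (X;A) ⊩ φρ implies T, A ⊢_X φρ. In particular, if the empty condition forces a generalized geometric sentence φ, then T ⊢ φ. -/

import Mathlib

/-!
Induction on the generalized geometric implication, for all conditions and environments at
once. Atoms, `⊥`, disjunctions and existentials are forced through a cover, and the claim at
each member of the cover (for an atom: it is one of the hypotheses there) descends to the
condition itself by local character of provability. Local character is proved by induction on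
the cover: an isomorphism is undone by an injective renaming of variables, and an instance of
a coherent axiom `∀ x⃗ (φ₀ → ⋁_d ∃ y⃗. φ_d)` whose premise holds at `C` is eliminated by
`∨`-elimination followed by `∃`-elimination with exactly the fresh variables of the extensions
of `C` by the `φ_d`. Universal quantifiers and implications `α → φ` are forced along all
morphisms, in particular along the inclusions into `(X, x; A)` with `x` fresh and into
`(X; A, α)`, which yields the premises of `∀`- and `→`-introduction.
-/

namespace CoherentForcing

/- ## Syntax: terms, atoms, conditions, substitutions -/

/-- Ground terms over a signature of function symbols `F` with arities `far`,
with named variables in ℕ. -/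
inductive Tm (F : Type) (far : F → ℕ) : Type
  | fvar (x : ℕ) : Tm F far
  | app (f : F) (a : Fin (far f) → Tm F far) : Tm F far

variable {F : Type} {far : F → ℕ} {R : Type} {rar : R → ℕ}

/-- Free variables of a ground term. -/
def Tm.fv : Tm F far → Set ℕ
  | .fvar x => {x}
  | .app _ a => ⋃ i, (a i).fv

/-- Applying a substitution to a ground term. -/
def Tm.subst (σ : ℕ → Tm F far) : Tm F far → Tm F far
  | .fvar x => σ x
  | .app f a => .app f fun i => (a i).subst σ

/-- Atoms over relation symbols `R` with arities `rar`. -/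
abbrev Atom (F : Type) (far : F → ℕ) (R : Type) (rar : R → ℕ) : Type :=
  (r : R) × (Fin (rar r) → Tm F far)

/-- Free variables of an atom. -/
def Atom.fv (a : Atom F far R rar) : Set ℕ := ⋃ i, (a.2 i).fv

/-- Applying a substitution to an atom. -/
def Atom.subst (σ : ℕ → Tm F far) (a : Atom F far R rar) : Atom F far R rar :=
  ⟨a.1, fun i => (a.2 i).subst σ⟩

/-- A forcing condition (X;A): a finite set X of variables together with a finite
set A of atoms whose variables lie in X. -/
structure Cond (F : Type) (far : F → ℕ) (R : Type) (rar : R → ℕ) : Type where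
  X : Finset ℕ
  A : Set (Atom F far R rar)
  finA : A.Finite
  wf : ∀ a ∈ A, Atom.fv a ⊆ ↑X

/-- The three categories of forcing conditions: renamings, variable substitutions,
term substitutions. -/
inductive MC | rn | vs | ts

/-- `Mor mc D C σ`: the substitution `σ` is a morphism `D ⟶ C` of conditions in the
category determined by `mc`. -/
structure Mor (mc : MC) (D C : Cond F far R rar) (σ : ℕ → Tm F far) : Prop where
  fvsub : ∀ x ∈ C.X, (σ x).fv ⊆ ↑D.X
  atoms : ∀ a ∈ C.A, Atom.subst σ a ∈ D.A
  cls : match mc with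
    | .ts => True
    | .vs => ∀ x ∈ C.X, ∃ y, σ x = Tm.fvar y
    | .rn => (∀ x ∈ C.X, ∃ y, σ x = Tm.fvar y) ∧ Set.InjOn σ ↑C.X

/-- `σ` is an isomorphism of conditions `D ≅ C` (a bijective renaming). -/
def IsIsoMor (D C : Cond F far R rar) (σ : ℕ → Tm F far) : Prop :=
  Mor .rn D C σ ∧ ∃ τ : ℕ → Tm F far, Mor .rn C D τ ∧
    (∀ x ∈ C.X, (σ x).subst τ = Tm.fvar x) ∧ (∀ y ∈ D.X, (τ y).subst σ = Tm.fvar y)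

/-- A sink: a set of pairs (domain condition, substitution), thought of as a family of
morphisms into a fixed condition. -/
abbrev Sink (F : Type) (far : F → ℕ) (R : Type) (rar : R → ℕ) : Type :=
  Set (Cond F far R rar × (ℕ → Tm F far))

/- ## Formulas (infinitary first-order, locally nameless: named free variables,
de Bruijn indices for bound variables, the variable bound by the nearest enclosing
binder being the *last* index) -/

/-- Terms in context `n`: named free variables plus `n` de Bruijn indices. -/
inductive Tmc (F : Type) (far : F → ℕ) (n : ℕ) : Type
  | fvar (x : ℕ) : Tmc F far n
  | bvar (i : Fin n) : Tmc F far n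
  | app (f : F) (a : Fin (far f) → Tmc F far n) : Tmc F far n

/-- A ground term is a term in any context. -/
def Tm.toTmc {n : ℕ} : Tm F far → Tmc F far n
  | .fvar x => .fvar x
  | .app f a => .app f fun i => (a i).toTmc

/-- Evaluating a term in context via `σ` on free variables and `ρ` on indices. -/
def Tmc.eval (σ : ℕ → Tm F far) {n : ℕ} (ρ : Fin n → Tm F far) :
    Tmc F far n → Tm F far
  | .fvar x => σ x
  | .bvar i => ρ i
  | .app f a => .app f fun i => (a i).eval σ ρ

/-- Named free variables of a term in context. -/
def Tmc.fv {n : ℕ} : Tmc F far n → Set ℕ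
  | .fvar x => {x}
  | .bvar _ => ∅
  | .app _ a => ⋃ i, (a i).fv

/-- A term in context has no named free variables. -/
def Tmc.noFvar {n : ℕ} : Tmc F far n → Prop
  | .fvar _ => False
  | .bvar _ => True
  | .app _ a => ∀ i, (a i).noFvar

/-- Applying a substitution to the named free variables of a term in context. -/
def Tmc.substFv (σ : ℕ → Tm F far) {n : ℕ} : Tmc F far n → Tmc F far n
  | .fvar x => (σ x).toTmc
  | .bvar i => .bvar i
  | .app f a => .app f fun i => (a i).substFv σ

/-- (Possibly infinitary) first-order formulas in context `n`. -/
inductive Fml (F : Type) (far : F → ℕ) (R : Type) (rar : R → ℕ) : ℕ → Type 1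
  | atom {n : ℕ} (r : R) (ts : Fin (rar r) → Tmc F far n) : Fml F far R rar n
  | eq {n : ℕ} (s t : Tmc F far n) : Fml F far R rar n
  | top {n : ℕ} : Fml F far R rar n
  | bot {n : ℕ} : Fml F far R rar n
  | conj {n : ℕ} : Fml F far R rar n → Fml F far R rar n → Fml F far R rar n
  | disj {n : ℕ} (I : Type) (f : I → Fml F far R rar n) : Fml F far R rar n
  | imp {n : ℕ} : Fml F far R rar n → Fml F far R rar n → Fml F far R rar n
  | all {n : ℕ} : Fml F far R rar (n + 1) → Fml F far R rar n
  | ex {n : ℕ} : Fml F far R rar (n + 1) → Fml F far R rar n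

/-- Negation. -/
abbrev Fml.neg {n : ℕ} (φ : Fml F far R rar n) : Fml F far R rar n := .imp φ .bot

/-- Named free variables of a formula. -/
def Fml.fv : {n : ℕ} → Fml F far R rar n → Set ℕ
  | _, .atom _ ts => ⋃ i, (ts i).fv
  | _, .eq s t => s.fv ∪ t.fv
  | _, .top => ∅
  | _, .bot => ∅
  | _, .conj φ ψ => φ.fv ∪ ψ.fv
  | _, .disj _ f => ⋃ i, (f i).fv
  | _, .imp φ ψ => φ.fv ∪ ψ.fv
  | _, .all φ => φ.fv
  | _, .ex φ => φ.fv

/-- Applying a substitution to the named free variables of a formula. -/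
def Fml.substFv (σ : ℕ → Tm F far) : {n : ℕ} → Fml F far R rar n → Fml F far R rar n
  | _, .atom r ts => .atom r fun i => (ts i).substFv σ
  | _, .eq s t => .eq (s.substFv σ) (t.substFv σ)
  | _, .top => .top
  | _, .bot => .bot
  | _, .conj φ ψ => .conj (φ.substFv σ) (ψ.substFv σ)
  | _, .disj I f => .disj I fun i => (f i).substFv σ
  | _, .imp φ ψ => .imp (φ.substFv σ) (ψ.substFv σ)
  | _, .all φ => .all (φ.substFv σ)
  | _, .ex φ => .ex (φ.substFv σ)

/-- Shifting de Bruijn indices of a term into an extended context. -/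
def Tmc.shift {k : ℕ} : Tmc F far k → Tmc F far (k + 1)
  | .fvar x => .fvar x
  | .bvar i => .bvar i.castSucc
  | .app f a => .app f fun i => (a i).shift

/-- Simultaneous substitution for the de Bruijn indices of a term. -/
def Tmc.bsubst {m k : ℕ} (θ : Fin m → Tmc F far k) : Tmc F far m → Tmc F far k
  | .fvar x => .fvar x
  | .bvar i => θ i
  | .app f a => .app f fun i => (a i).bsubst θ

/-- Extending a de Bruijn substitution under a binder. -/
def extendB {m k : ℕ} (θ : Fin m → Tmc F far k) : Fin (m + 1) → Tmc F far (k + 1) :=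
  Fin.snoc (fun i => (θ i).shift) (.bvar (Fin.last k))

/-- Simultaneous substitution for the de Bruijn indices of a formula. -/
def Fml.bsubst : {m k : ℕ} → (Fin m → Tmc F far k) → Fml F far R rar m → Fml F far R rar k
  | _, _, θ, .atom r ts => .atom r fun i => (ts i).bsubst θ
  | _, _, θ, .eq s t => .eq (s.bsubst θ) (t.bsubst θ)
  | _, _, _, .top => .top
  | _, _, _, .bot => .bot
  | _, _, θ, .conj φ ψ => .conj (φ.bsubst θ) (ψ.bsubst θ)
  | _, _, θ, .disj I f => .disj I fun i => (f i).bsubst θ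
  | _, _, θ, .imp φ ψ => .imp (φ.bsubst θ) (ψ.bsubst θ)
  | _, _, θ, .all φ => .all (φ.bsubst (extendB θ))
  | _, _, θ, .ex φ => .ex (φ.bsubst (extendB θ))

/-- Opening the outermost binder of a one-variable formula with a ground term. -/
def Fml.open0 (t : Tm F far) (φ : Fml F far R rar 1) : Fml F far R rar 0 :=
  φ.bsubst fun _ => t.toTmc

/- ## Coherent theories and the generated coverage -/

/-- Atoms in context `n` (for the components of coherent axioms). -/
abbrev CAtom (F : Type) (far : F → ℕ) (R : Type) (rar : R → ℕ) (n : ℕ) : Type :=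
  (r : R) × (Fin (rar r) → Tmc F far n)

/-- Instantiating an atom in context `m` by an assignment of its de Bruijn variables. -/
def CAtom.inst {m : ℕ} (ι : Fin m → Tm F far) (a : CAtom F far R rar m) :
    Atom F far R rar :=
  ⟨a.1, fun i => (a.2 i).eval Tm.fvar ι⟩

/-- A coherent axiom ∀ x₁…x_m (φ₀ → ⋁_d ∃ y₁…y_{k_d}. φ_d), where the φ's are finite
conjunctions of atoms (as lists), presented without named free variables. -/
structure CohAx (F : Type) (far : F → ℕ) (R : Type) (rar : R → ℕ) : Type where
  m : ℕ
  hyp : List (CAtom F far R rar m)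
  concl : List ((k : ℕ) × List (CAtom F far R rar (m + k)))
  hypClosed : ∀ a ∈ hyp, ∀ i, (a.2 i).noFvar
  conclClosed : ∀ d ∈ concl, ∀ a ∈ d.2, ∀ i, (a.2 i).noFvar

/-- The `j`-th fresh variable not occurring in the condition `C`. -/
def freshVar (C : Cond F far R rar) (j : ℕ) : ℕ := C.X.sup id + 1 + j

lemma Tm.fv_eval {n : ℕ} (ι : Fin n → Tm F far) (t : Tmc F far n) (ht : t.noFvar) :
    (t.eval Tm.fvar ι).fv ⊆ ⋃ j, (ι j).fv := by
  induction t with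
  | fvar x => exact absurd ht id
  | bvar i => exact Set.subset_iUnion (fun j => (ι j).fv) i
  | app f a ih =>
    intro y hy
    obtain ⟨i, hi⟩ := Set.mem_iUnion.mp hy
    exact ih i (ht i) hi

/-- The extension (X, y⃗; A, φ_d) of a condition by one disjunct of an instantiated
coherent axiom, using fresh variables y⃗ for the existentially bound variables. -/
def Cond.extend (C : Cond F far R rar) {m k : ℕ} (ι : Fin m → Tm F far)
    (hι : ∀ i, (ι i).fv ⊆ ↑C.X) (ats : List (CAtom F far R rar (m + k)))
    (hats : ∀ a ∈ ats, ∀ i, (a.2 i).noFvar) : Cond F far R rar where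
  X := C.X ∪ Finset.image (fun j : Fin k => freshVar C j) Finset.univ
  A := C.A ∪ (CAtom.inst (Fin.append ι fun j : Fin k => Tm.fvar (freshVar C j))) ''
        {a | a ∈ ats}
  finA := C.finA.union (ats.finite_toSet.image _)
  wf := by
    rintro a (ha | ⟨b, hb, rfl⟩)
    · exact (C.wf a ha).trans (by intro y hy; simp only [Finset.coe_union]; exact Or.inl hy)
    · intro y hy
      obtain ⟨i, hi⟩ := Set.mem_iUnion.mp hy
      obtain ⟨j, hj⟩ := Set.mem_iUnion.mp (Tm.fv_eval _ _ (hats b hb i) hi)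
      simp only [Finset.coe_union, Finset.coe_image, Set.mem_union]
      revert hj
      refine Fin.addCases (fun i0 hj => ?_) (fun j0 hj => ?_) j
      · rw [Fin.append_left] at hj
        exact Or.inl (hι i0 hj)
      · rw [Fin.append_right] at hj
        rcases hj with rfl
        exact Or.inr ⟨j0, Finset.mem_coe.mpr (Finset.mem_univ j0), rfl⟩

/-- The coverage ◁_T generated by a coherent theory `T`: isomorphism singletons are
covers, and for each instance of an axiom of `T` applicable at `C`, the union of
covers of the extensions of `C` by the disjuncts is a cover of `C` (the connecting
morphisms being the identity substitutions). -/
inductive Cov (T : Set (CohAx F far R rar)) :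
    Cond F far R rar → Sink F far R rar → Prop
  | iso {C D : Cond F far R rar} {σ : ℕ → Tm F far} (h : IsIsoMor D C σ) :
      Cov T C {(D, σ)}
  | step {C : Cond F far R rar} (ax : CohAx F far R rar) (hax : ax ∈ T)
      (ι : Fin ax.m → Tm F far) (hι : ∀ i, (ι i).fv ⊆ ↑C.X)
      (hhyp : ∀ a ∈ ax.hyp, CAtom.inst ι a ∈ C.A)
      (U : Fin ax.concl.length → Sink F far R rar)
      (hU : ∀ i : Fin ax.concl.length,
        Cov T (C.extend ι hι (ax.concl.get i).2
            (fun a ha j => ax.conclClosed _ (List.get_mem _ i) a ha j))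
          (U i)) :
      Cov T C (⋃ i, U i)

/- ## The forcing relation -/

/-- The forcing relation `C ⊩ φ[σ, ρ]`, where `mc` determines the category of
conditions (renamings / variable substitutions / term substitutions), `cov` is a
coverage, `σ` interprets the named free variables and `ρ` the de Bruijn variables
of `φ` by terms over `C`. -/
def Forces (mc : MC) (cov : Cond F far R rar → Sink F far R rar → Prop) :
    {n : ℕ} → Cond F far R rar → (ℕ → Tm F far) → (Fin n → Tm F far) →
      Fml F far R rar n → Prop
  | _, C, σ, ρ, .atom r ts => ∃ U, cov C U ∧ ∀ p ∈ U,
      (⟨r, fun i => ((ts i).eval σ ρ).subst p.2⟩ : Atom F far R rar) ∈ p.1.A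
  | _, C, σ, ρ, .eq s t => ∃ U, cov C U ∧ ∀ p ∈ U,
      (s.eval σ ρ).subst p.2 = (t.eval σ ρ).subst p.2
  | _, _, _, _, .top => True
  | _, C, _, _, .bot => cov C ∅
  | _, C, σ, ρ, .conj φ ψ => Forces mc cov C σ ρ φ ∧ Forces mc cov C σ ρ ψ
  | _, C, σ, ρ, .disj _ f => ∃ U, cov C U ∧ ∀ p ∈ U, ∃ i,
      Forces mc cov p.1 (fun x => (σ x).subst p.2) (fun i0 => (ρ i0).subst p.2) (f i)
  | _, C, σ, ρ, .imp φ ψ => ∀ D τ, Mor mc D C τ →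
      Forces mc cov D (fun x => (σ x).subst τ) (fun i => (ρ i).subst τ) φ →
      Forces mc cov D (fun x => (σ x).subst τ) (fun i => (ρ i).subst τ) ψ
  | _, C, σ, ρ, .all φ => ∀ D τ, Mor mc D C τ → ∀ t : Tm F far, t.fv ⊆ ↑D.X →
      Forces mc cov D (fun x => (σ x).subst τ)
        (Fin.snoc (fun i => (ρ i).subst τ) t) φ
  | _, C, σ, ρ, .ex φ => ∃ U, cov C U ∧ ∀ p ∈ U, ∃ t, t.fv ⊆ ↑p.1.X ∧
      Forces mc cov p.1 (fun x => (σ x).subst p.2)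
        (Fin.snoc (fun i => (ρ i).subst p.2) t) φ

/- ## Provability -/

/-- Intuitionistic (or, when `em` holds, classical) provability `Γ ⊢_X φ` in logic
without equality, sound for empty domains: `X` is the set of free variables allowed
in the derivation. -/
inductive Prv (em : Prop) :
    Finset ℕ → Set (Fml F far R rar 0) → Fml F far R rar 0 → Prop
  | ax {X Γ φ} (h : φ ∈ Γ) : Prv em X Γ φ
  | topI {X Γ} : Prv em X Γ .top
  | botE {X Γ φ} : Prv em X Γ .bot → Prv em X Γ φ
  | conjI {X Γ φ ψ} : Prv em X Γ φ → Prv em X Γ ψ → Prv em X Γ (.conj φ ψ)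
  | conjE1 {X Γ φ ψ} : Prv em X Γ (.conj φ ψ) → Prv em X Γ φ
  | conjE2 {X Γ φ ψ} : Prv em X Γ (.conj φ ψ) → Prv em X Γ ψ
  | disjI {X Γ I} {f : I → Fml F far R rar 0} (i : I) :
      Prv em X Γ (f i) → Prv em X Γ (.disj I f)
  | disjE {X Γ I} {f : I → Fml F far R rar 0} {ψ} :
      Prv em X Γ (.disj I f) → (∀ i, Prv em X (insert (f i) Γ) ψ) → Prv em X Γ ψ
  | impI {X Γ φ ψ} : Prv em X (insert φ Γ) ψ → Prv em X Γ (.imp φ ψ)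
  | impE {X Γ φ ψ} : Prv em X Γ (.imp φ ψ) → Prv em X Γ φ → Prv em X Γ ψ
  | allI {X : Finset ℕ} {Γ} {φ} (x : ℕ) (hx : x ∉ X) (hφ : x ∉ Fml.fv (.all φ))
      (hΓ : ∀ ψ ∈ Γ, x ∉ Fml.fv ψ) :
      Prv em (insert x X) Γ (Fml.open0 (.fvar x) φ) → Prv em X Γ (.all φ)
  | allE {X : Finset ℕ} {Γ} {φ} (t : Tm F far) (ht : t.fv ⊆ ↑X) :
      Prv em X Γ (.all φ) → Prv em X Γ (Fml.open0 t φ)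
  | exI {X : Finset ℕ} {Γ} {φ} (t : Tm F far) (ht : t.fv ⊆ ↑X) :
      Prv em X Γ (Fml.open0 t φ) → Prv em X Γ (.ex φ)
  | exE {X : Finset ℕ} {Γ} {φ} {ψ} (x : ℕ) (hx : x ∉ X) (hφ : x ∉ Fml.fv (.ex φ)) (hψ : x ∉ Fml.fv ψ)
      (hΓ : ∀ χ ∈ Γ, x ∉ Fml.fv χ) :
      Prv em X Γ (.ex φ) →
      Prv em (insert x X) (insert (Fml.open0 (.fvar x) φ) Γ) ψ → Prv em X Γ ψ
  | em {X Γ} (φ : Fml F far R rar 0) (h : em) :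
      Prv em X Γ (.disj Bool fun b => bif b then φ else φ.neg)

/- ## Coherent axioms as formulas -/

/-- An atom of a condition, as a closed formula. -/
def atomF (a : Atom F far R rar) : Fml F far R rar 0 :=
  .atom a.1 fun i => (a.2 i).toTmc

/-- Universal closure. -/
def Fml.alls : (m : ℕ) → Fml F far R rar m → Fml F far R rar 0
  | 0, φ => φ
  | m + 1, φ => Fml.alls m (.all φ)

/-- Iterated existential quantification. -/
def Fml.exs {m : ℕ} : (k : ℕ) → Fml F far R rar (m + k) → Fml F far R rar m
  | 0, φ => φ
  | k + 1, φ => Fml.exs k (.ex φ)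

/-- Conjunction of a list of atoms in context. -/
def listConj {n : ℕ} (l : List (CAtom F far R rar n)) : Fml F far R rar n :=
  l.foldr (fun a ψ => .conj (.atom a.1 a.2) ψ) .top

/-- A coherent axiom as a sentence: ∀ x⃗ (φ₀ → ⋁_d ∃ y⃗_d. φ_d). -/
def CohAx.toFml (ax : CohAx F far R rar) : Fml F far R rar 0 :=
  .alls ax.m (.imp (listConj ax.hyp)
    (.disj (Fin ax.concl.length) fun i =>
      .exs (ax.concl.get i).1 (listConj (ax.concl.get i).2)))

/- ## Classes of formulas -/

/-- Generalized geometric implications (in logic without equality):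
φ ::= α | φ₁ ∧ φ₂ | ⋁ᵢ φᵢ | ∃x.φ | ∀x.φ | (α → φ) with α an atom, ⊤ or ⊥. -/
inductive GGI : {n : ℕ} → Fml F far R rar n → Prop
  | atom {n r ts} : GGI (n := n) (.atom r ts)
  | top {n} : GGI (n := n) .top
  | bot {n} : GGI (n := n) .bot
  | conj {n} {φ ψ : Fml F far R rar n} : GGI φ → GGI ψ → GGI (.conj φ ψ)
  | disj {n I} {f : I → Fml F far R rar n} : (∀ i, GGI (f i)) → GGI (.disj I f)
  | ex {n} {φ : Fml F far R rar (n + 1)} : GGI φ → GGI (.ex φ)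
  | all {n} {φ : Fml F far R rar (n + 1)} : GGI φ → GGI (.all φ)
  | impAtom {n r ts} {φ : Fml F far R rar n} : GGI φ → GGI (.imp (.atom r ts) φ)
  | impTop {n} {φ : Fml F far R rar n} : GGI φ → GGI (.imp .top φ)
  | impBot {n} {φ : Fml F far R rar n} : GGI φ → GGI (.imp .bot φ)

/-- Positive formulas (no equality): built from atoms, ⊤, ⊥ by ∧, ⋁, ∃. -/
inductive Pos : {n : ℕ} → Fml F far R rar n → Prop
  | atom {n r ts} : Pos (n := n) (.atom r ts)
  | top {n} : Pos (n := n) .top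
  | bot {n} : Pos (n := n) .bot
  | conj {n} {φ ψ : Fml F far R rar n} : Pos φ → Pos ψ → Pos (.conj φ ψ)
  | disj {n I} {f : I → Fml F far R rar n} : (∀ i, Pos (f i)) → Pos (.disj I f)
  | ex {n} {φ : Fml F far R rar (n + 1)} : Pos φ → Pos (.ex φ)

/-- Geometric implications: universally quantified implications between positive
formulas. -/
inductive GeomImp : {n : ℕ} → Fml F far R rar n → Prop
  | base {n} {φ ψ : Fml F far R rar n} : Pos φ → Pos ψ → GeomImp (Fml.imp φ ψ)
  | all {n} {φ : Fml F far R rar (n + 1)} : GeomImp φ → GeomImp (Fml.all φ)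


/-- The empty condition (;). -/
def emptyCond : Cond F far R rar :=
  ⟨∅, ∅, Set.finite_empty, fun a ha => absurd ha (Set.notMem_empty a)⟩

namespace Tm

theorem subst_congr {σ σ' : ℕ → Tm F far} {t : Tm F far} (h : ∀ x ∈ t.fv, σ x = σ' x) :
    t.subst σ = t.subst σ' := by
  induction t with
  | fvar x => exact h x rfl
  | app f a ih =>
    simpa [Tm.subst, funext_iff] using fun i => ih i fun x hx => h x (Set.mem_iUnion_of_mem i hx)

@[simp] theorem subst_fvar (t : Tm F far) : t.subst Tm.fvar = t := by
  induction t <;> simp_all [Tm.subst]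

theorem mem_fv_subst {σ : ℕ → Tm F far} {t : Tm F far} {y : ℕ} (hy : y ∈ (t.subst σ).fv) :
    ∃ x ∈ t.fv, y ∈ (σ x).fv := by
  induction t with
  | fvar x => exact ⟨x, rfl, hy⟩
  | app f a ih =>
    obtain ⟨i, hi⟩ := Set.mem_iUnion.mp hy
    obtain ⟨x, hx, hxy⟩ := ih i hi
    exact ⟨x, Set.mem_iUnion_of_mem i hx, hxy⟩

@[simp] theorem toTmc_bsubst {m k : ℕ} (θ : Fin m → Tmc F far k) (t : Tm F far) :
    (t.toTmc : Tmc F far m).bsubst θ = t.toTmc := by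
  induction t <;> simp_all [Tm.toTmc, Tmc.bsubst]

@[simp] theorem toTmc_shift {k : ℕ} (t : Tm F far) : (t.toTmc : Tmc F far k).shift = t.toTmc := by
  induction t <;> simp_all [Tm.toTmc, Tmc.shift]

@[simp] theorem toTmc_substFv {n : ℕ} (σ : ℕ → Tm F far) (t : Tm F far) :
    (t.toTmc : Tmc F far n).substFv σ = (t.subst σ).toTmc := by
  induction t <;> simp_all [Tm.toTmc, Tm.subst, Tmc.substFv]

@[simp] theorem fv_toTmc {n : ℕ} (t : Tm F far) : (t.toTmc : Tmc F far n).fv = t.fv := by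
  induction t <;> simp_all [Tm.toTmc, Tmc.fv, Tm.fv]

end Tm

namespace Tmc

theorem substFv_congr {σ σ' : ℕ → Tm F far} {n : ℕ} {t : Tmc F far n}
    (h : ∀ x ∈ t.fv, σ x = σ' x) : t.substFv σ = t.substFv σ' := by
  induction t with
  | fvar x => simp [Tmc.substFv, h x rfl]
  | bvar i => rfl
  | app f a ih =>
    simpa [Tmc.substFv, funext_iff] using fun i => ih i fun x hx => h x (Set.mem_iUnion_of_mem i hx)

@[simp] theorem substFv_fvar {n : ℕ} (t : Tmc F far n) : t.substFv Tm.fvar = t := by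
  induction t <;> simp_all [Tmc.substFv, Tm.toTmc]

theorem substFv_substFv (σ σ' : ℕ → Tm F far) {n : ℕ} (t : Tmc F far n) :
    (t.substFv σ).substFv σ' = t.substFv (fun x => (σ x).subst σ') := by
  induction t <;> simp_all [Tmc.substFv]

theorem mem_fv_substFv {σ : ℕ → Tm F far} {n : ℕ} {t : Tmc F far n} {y : ℕ}
    (hy : y ∈ (t.substFv σ).fv) : ∃ x ∈ t.fv, y ∈ (σ x).fv := by
  induction t with
  | fvar x => exact ⟨x, rfl, by simpa [Tmc.substFv] using hy⟩
  | bvar i => simp [Tmc.substFv, Tmc.fv] at hy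
  | app f a ih =>
    obtain ⟨i, hi⟩ := Set.mem_iUnion.mp hy
    obtain ⟨x, hx, hxy⟩ := ih i hi
    exact ⟨x, Set.mem_iUnion_of_mem i hx, hxy⟩

@[simp] theorem fv_shift {k : ℕ} (t : Tmc F far k) : t.shift.fv = t.fv := by
  induction t <;> simp_all [Tmc.shift, Tmc.fv]

theorem mem_fv_bsubst {m k : ℕ} {θ : Fin m → Tmc F far k} {t : Tmc F far m} {y : ℕ}
    (hy : y ∈ (t.bsubst θ).fv) : y ∈ t.fv ∨ ∃ i, y ∈ (θ i).fv := by
  induction t with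
  | fvar x => exact Or.inl hy
  | bvar i => exact Or.inr ⟨i, hy⟩
  | app f a ih =>
    obtain ⟨i, hi⟩ := Set.mem_iUnion.mp hy
    exact (ih i hi).imp_left (Set.mem_iUnion_of_mem i)

theorem bsubst_bsubst {m k l : ℕ} (θ : Fin m → Tmc F far k) (θ' : Fin k → Tmc F far l)
    (t : Tmc F far m) : (t.bsubst θ).bsubst θ' = t.bsubst (fun i => (θ i).bsubst θ') := by
  induction t <;> simp_all [Tmc.bsubst]

@[simp] theorem bsubst_bvar {m : ℕ} (t : Tmc F far m) : t.bsubst .bvar = t := by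
  induction t <;> simp_all [Tmc.bsubst]

theorem shift_bsubst_extendB {m k : ℕ} (θ : Fin m → Tmc F far k) (t : Tmc F far m) :
    t.shift.bsubst (extendB θ) = (t.bsubst θ).shift := by
  induction t <;> simp_all [Tmc.shift, Tmc.bsubst, extendB]

theorem shift_substFv {k : ℕ} (σ : ℕ → Tm F far) (t : Tmc F far k) :
    t.shift.substFv σ = (t.substFv σ).shift := by
  induction t <;> simp_all [Tmc.shift, Tmc.substFv]

theorem bsubst_substFv {m k : ℕ} (σ : ℕ → Tm F far) (θ : Fin m → Tmc F far k)
    (t : Tmc F far m) :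
    (t.bsubst θ).substFv σ = (t.substFv σ).bsubst (fun i => (θ i).substFv σ) := by
  induction t <;> simp_all [Tmc.bsubst, Tmc.substFv]

theorem substFv_bsubst_toTmc {n k : ℕ} (σ : ℕ → Tm F far) (ρ : Fin n → Tm F far)
    (t : Tmc F far n) :
    (t.substFv σ).bsubst (fun i => ((ρ i).toTmc : Tmc F far k)) = (t.eval σ ρ).toTmc := by
  induction t <;> simp_all [Tmc.substFv, Tmc.bsubst, Tmc.eval, Tm.toTmc]

theorem fv_eq_empty_of_noFvar {n : ℕ} {t : Tmc F far n} (h : t.noFvar) : t.fv = ∅ := by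
  induction t with
  | fvar x => exact absurd h id
  | bvar i => rfl
  | app f a ih => exact Set.iUnion_eq_empty.mpr fun i => ih i (h i)

end Tmc

theorem extendB_bvar {m : ℕ} : extendB (fun i : Fin m => (Tmc.bvar i : Tmc F far m)) = .bvar := by
  funext i
  induction i using Fin.lastCases <;> simp [extendB, Tmc.shift]

theorem extendB_bsubst_extendB {m k l : ℕ} (θ : Fin m → Tmc F far k) (θ' : Fin k → Tmc F far l) :
    (fun i => (extendB θ i).bsubst (extendB θ')) = extendB (fun i => (θ i).bsubst θ') := by
  funext i
  induction i using Fin.lastCases with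
  | last => simp [extendB, Tmc.bsubst]
  | cast i => simpa [extendB] using Tmc.shift_bsubst_extendB θ' (θ i)

theorem extendB_substFv {m k : ℕ} (σ : ℕ → Tm F far) (θ : Fin m → Tmc F far k) :
    (fun i => (extendB θ i).substFv σ) = extendB (fun i => (θ i).substFv σ) := by
  funext i
  induction i using Fin.lastCases <;> simp [extendB, Tmc.substFv, Tmc.shift_substFv]

namespace Fml

theorem substFv_congr {σ σ' : ℕ → Tm F far} {n : ℕ} {φ : Fml F far R rar n}
    (h : ∀ x ∈ φ.fv, σ x = σ' x) : φ.substFv σ = φ.substFv σ' := by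
  induction φ with
  | atom r ts =>
    simpa [substFv, funext_iff] using fun i =>
      Tmc.substFv_congr fun x hx => h x (Set.mem_iUnion_of_mem i hx)
  | eq s t =>
    simp only [substFv, eq.injEq]
    exact ⟨Tmc.substFv_congr fun x hx => h x (.inl hx), Tmc.substFv_congr fun x hx => h x (.inr hx)⟩
  | disj I f ih =>
    simpa [substFv, funext_iff] using fun i => ih i fun x hx => h x (Set.mem_iUnion_of_mem i hx)
  | _ => simp_all [substFv, fv]

@[simp] theorem substFv_fvar {n : ℕ} (φ : Fml F far R rar n) : φ.substFv Tm.fvar = φ := by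
  induction φ <;> simp_all [substFv]

theorem substFv_substFv (σ σ' : ℕ → Tm F far) {n : ℕ} (φ : Fml F far R rar n) :
    (φ.substFv σ).substFv σ' = φ.substFv (fun x => (σ x).subst σ') := by
  induction φ <;> simp_all [substFv, Tmc.substFv_substFv]

theorem mem_fv_substFv {σ : ℕ → Tm F far} {n : ℕ} {φ : Fml F far R rar n} {y : ℕ}
    (hy : y ∈ (φ.substFv σ).fv) : ∃ x ∈ φ.fv, y ∈ (σ x).fv := by
  induction φ with
  | atom r ts =>
    obtain ⟨i, hi⟩ := Set.mem_iUnion.mp hy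
    obtain ⟨x, hx, hxy⟩ := Tmc.mem_fv_substFv hi
    exact ⟨x, Set.mem_iUnion_of_mem i hx, hxy⟩
  | eq s t =>
    rcases hy with hy | hy <;> obtain ⟨x, hx, hxy⟩ := Tmc.mem_fv_substFv hy
    exacts [⟨x, .inl hx, hxy⟩, ⟨x, .inr hx, hxy⟩]
  | top | bot => simp [substFv, fv] at hy
  | conj φ ψ ihφ ihψ | imp φ ψ ihφ ihψ =>
    rcases hy with hy | hy
    exacts [(ihφ hy).imp fun x ⟨hx, hxy⟩ => ⟨.inl hx, hxy⟩,
      (ihψ hy).imp fun x ⟨hx, hxy⟩ => ⟨.inr hx, hxy⟩]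
  | disj I f ih =>
    obtain ⟨i, hi⟩ := Set.mem_iUnion.mp hy
    obtain ⟨x, hx, hxy⟩ := ih i hi
    exact ⟨x, Set.mem_iUnion_of_mem i hx, hxy⟩
  | all φ ih | ex φ ih => exact ih hy

theorem mem_fv_bsubst {m k : ℕ} {θ : Fin m → Tmc F far k} {φ : Fml F far R rar m} {y : ℕ}
    (hy : y ∈ (φ.bsubst θ).fv) : y ∈ φ.fv ∨ ∃ i, y ∈ (θ i).fv := by
  induction φ generalizing k with
  | atom r ts =>
    obtain ⟨i, hi⟩ := Set.mem_iUnion.mp hy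
    exact (Tmc.mem_fv_bsubst hi).imp_left (Set.mem_iUnion_of_mem i)
  | eq s t =>
    rcases hy with hy | hy
    exacts [(Tmc.mem_fv_bsubst hy).imp_left .inl, (Tmc.mem_fv_bsubst hy).imp_left .inr]
  | top | bot => simp [bsubst, fv] at hy
  | conj φ ψ ihφ ihψ | imp φ ψ ihφ ihψ =>
    rcases hy with hy | hy
    exacts [(ihφ hy).imp_left .inl, (ihψ hy).imp_left .inr]
  | disj I f ih =>
    obtain ⟨i, hi⟩ := Set.mem_iUnion.mp hy
    exact (ih i hi).imp_left (Set.mem_iUnion_of_mem i)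
  | all φ ih | ex φ ih =>
    refine (ih hy).imp_right fun ⟨i, hi⟩ => ?_
    induction i using Fin.lastCases with
    | last => simp [extendB, Tmc.fv] at hi
    | cast i => exact ⟨i, by simpa [extendB] using hi⟩

theorem fv_bsubst_subset {m k : ℕ} {θ : Fin m → Tmc F far k} {φ : Fml F far R rar m}
    {X : Set ℕ} (hφ : φ.fv ⊆ X) (hθ : ∀ i, (θ i).fv ⊆ X) : (φ.bsubst θ).fv ⊆ X := fun _ hy =>
  (mem_fv_bsubst hy).elim (fun h => hφ h) fun ⟨i, hi⟩ => hθ i hi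

@[simp] theorem fv_alls (m : ℕ) (φ : Fml F far R rar m) : (alls m φ).fv = φ.fv := by
  induction m with
  | zero => rfl
  | succ m ih => exact ih (.all φ)

@[simp] theorem fv_exs {m : ℕ} (k : ℕ) (φ : Fml F far R rar (m + k)) :
    (exs k φ).fv = φ.fv := by
  induction k with
  | zero => rfl
  | succ k ih => exact ih (.ex φ)

theorem bsubst_bsubst {m k l : ℕ} (θ : Fin m → Tmc F far k) (θ' : Fin k → Tmc F far l)
    (φ : Fml F far R rar m) : (φ.bsubst θ).bsubst θ' = φ.bsubst (fun i => (θ i).bsubst θ') := by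
  induction φ generalizing k l <;> simp_all [bsubst, Tmc.bsubst_bsubst, extendB_bsubst_extendB]

@[simp] theorem bsubst_bvar {m : ℕ} (φ : Fml F far R rar m) : φ.bsubst .bvar = φ := by
  induction φ <;> simp_all [bsubst, extendB_bvar]

theorem bsubst_substFv {m k : ℕ} (σ : ℕ → Tm F far) (θ : Fin m → Tmc F far k)
    (φ : Fml F far R rar m) :
    (φ.bsubst θ).substFv σ = (φ.substFv σ).bsubst (fun i => (θ i).substFv σ) := by
  induction φ generalizing k <;> simp_all [bsubst, substFv, Tmc.bsubst_substFv, extendB_substFv]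

theorem open0_substFv (σ : ℕ → Tm F far) (t : Tm F far) (φ : Fml F far R rar 1) :
    (open0 t φ).substFv σ = open0 (t.subst σ) (φ.substFv σ) := by
  simp [open0, bsubst_substFv]

theorem open0_bsubst_extendB {n : ℕ} (ρ : Fin n → Tm F far) (t : Tm F far)
    (φ : Fml F far R rar (n + 1)) :
    open0 t (φ.bsubst (extendB fun i => (ρ i).toTmc)) =
      φ.bsubst fun i => (Fin.snoc (α := fun _ => Tm F far) ρ t i).toTmc := by
  rw [open0, bsubst_bsubst]
  congr 1
  funext i
  induction i using Fin.lastCases <;> simp [extendB, Tmc.bsubst]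

/-- The sentence `φ[σ, ρ]` of which `Forces mc cov C σ ρ φ` speaks. -/
def inst {n : ℕ} (σ : ℕ → Tm F far) (ρ : Fin n → Tm F far) (φ : Fml F far R rar n) :
    Fml F far R rar 0 :=
  (φ.substFv σ).bsubst fun i => (ρ i).toTmc

theorem inst_elim0 (σ : ℕ → Tm F far) (φ : Fml F far R rar 0) :
    φ.inst σ Fin.elim0 = φ.substFv σ := by
  rw [inst, show (fun i : Fin 0 => ((Fin.elim0 i : Tm F far).toTmc : Tmc F far 0)) = .bvar from
    funext fun i => i.elim0, bsubst_bvar]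

theorem inst_atom {n : ℕ} (σ : ℕ → Tm F far) (ρ : Fin n → Tm F far) (r : R)
    (ts : Fin (rar r) → Tmc F far n) :
    (atom r ts).inst σ ρ = atomF ⟨r, fun i => (ts i).eval σ ρ⟩ := by
  simp [inst, substFv, bsubst, atomF, Tmc.substFv_bsubst_toTmc]

theorem inst_substFv {n : ℕ} (σ τ : ℕ → Tm F far) (ρ : Fin n → Tm F far)
    (φ : Fml F far R rar n) :
    (φ.inst σ ρ).substFv τ = φ.inst (fun y => (σ y).subst τ) (fun i => (ρ i).subst τ) := by
  simp [inst, bsubst_substFv, substFv_substFv]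

theorem fv_inst_subset {n : ℕ} {σ : ℕ → Tm F far} {ρ : Fin n → Tm F far}
    {φ : Fml F far R rar n} {X : Set ℕ} (hσ : ∀ y ∈ φ.fv, (σ y).fv ⊆ X)
    (hρ : ∀ i, (ρ i).fv ⊆ X) : (φ.inst σ ρ).fv ⊆ X := by
  intro z hz
  rcases mem_fv_bsubst hz with h | ⟨i, hi⟩
  · obtain ⟨x, hx, hxz⟩ := mem_fv_substFv h
    exact hσ x hx hxz
  · exact hρ i (by simpa using hi)

end Fml

theorem fv_listConj {n : ℕ} {l : List (CAtom F far R rar n)}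
    (hl : ∀ a ∈ l, ∀ i, (a.2 i).noFvar) : (listConj l).fv = ∅ := by
  induction l with
  | nil => rfl
  | cons a l ih =>
    simp only [listConj, List.foldr_cons, Fml.fv, Set.union_empty_iff, Set.iUnion_eq_empty]
    exact ⟨fun i => Tmc.fv_eq_empty_of_noFvar (hl a List.mem_cons_self i),
      ih fun b hb => hl b (List.mem_cons_of_mem a hb)⟩

theorem CohAx.fv_toFml (ax : CohAx F far R rar) : ax.toFml.fv = ∅ := by
  simp only [CohAx.toFml, Fml.fv_alls, Fml.fv, fv_listConj ax.hypClosed, Fml.fv_exs,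
    Set.empty_union, Set.iUnion_eq_empty]
  exact fun i => fv_listConj (ax.conclClosed _ (List.get_mem _ i))

@[simp] theorem fv_atomF (a : Atom F far R rar) : (atomF a).fv = a.fv := by
  simp [atomF, Fml.fv, Atom.fv]

theorem atomF_substFv (σ : ℕ → Tm F far) (a : Atom F far R rar) :
    (atomF a).substFv σ = atomF (a.subst σ) := by
  simp [atomF, Atom.subst, Fml.substFv]

theorem CAtom.atomF_inst {m : ℕ} (θ : Fin m → Tm F far) (a : CAtom F far R rar m) :
    (Fml.atom a.1 a.2).bsubst (fun i => (θ i).toTmc) = atomF (a.inst θ) := by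
  simpa [Fml.inst, Fml.substFv, CAtom.inst] using Fml.inst_atom (R := R) Tm.fvar θ a.1 a.2

theorem Fml.substFv_of_fv_eq_empty {n : ℕ} {φ : Fml F far R rar n} (h : φ.fv = ∅)
    (σ : ℕ → Tm F far) : φ.substFv σ = φ := by
  rw [Fml.substFv_congr (σ' := Tm.fvar) (by simp [h]), Fml.substFv_fvar]

/-- The hypotheses `T, A` of `T, A ⊢_X φ` for the condition `C = (X; A)`. -/
def Cond.ctx (T : Set (CohAx F far R rar)) (C : Cond F far R rar) : Set (Fml F far R rar 0) :=
  CohAx.toFml '' T ∪ atomF '' C.A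

theorem Cond.fv_subset_of_mem_ctx {T : Set (CohAx F far R rar)} {C : Cond F far R rar}
    {χ : Fml F far R rar 0} (hχ : χ ∈ C.ctx T) : χ.fv ⊆ C.X := by
  rcases hχ with ⟨ax, -, rfl⟩ | ⟨a, ha, rfl⟩
  · simp [CohAx.fv_toFml]
  · simpa using C.wf a ha

namespace Prv

variable {em : Prop}

/-- `hΔ` keeps the eigenvariables of the derivation fresh for the new hypotheses. -/
theorem weaken {X : Finset ℕ} {Γ : Set (Fml F far R rar 0)} {φ : Fml F far R rar 0}
    (h : Prv em X Γ φ) {Δ : Set (Fml F far R rar 0)} (hΔ : ∀ χ ∈ Δ, χ.fv ⊆ X) :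
    Prv em X (Γ ∪ Δ) φ := by
  induction h with
  | ax h => exact ax (.inl h)
  | topI => exact topI
  | botE _ ih => exact botE (ih hΔ)
  | conjI _ _ ih₁ ih₂ => exact conjI (ih₁ hΔ) (ih₂ hΔ)
  | conjE1 _ ih => exact conjE1 (ih hΔ)
  | conjE2 _ ih => exact conjE2 (ih hΔ)
  | disjI i _ ih => exact disjI i (ih hΔ)
  | disjE _ _ ih ihs => exact disjE (ih hΔ) fun i => Set.insert_union .. ▸ ihs i hΔ
  | impI _ ih => exact impI (Set.insert_union .. ▸ ih hΔ)
  | impE _ _ ih₁ ih₂ => exact impE (ih₁ hΔ) (ih₂ hΔ)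
  | @allI X Γ φ x hx hφ hΓ _ ih =>
    refine allI x hx hφ ?_ (ih fun χ hχ => (hΔ χ hχ).trans (by simp))
    rintro χ (hχ | hχ)
    exacts [hΓ χ hχ, fun hxχ => hx (hΔ χ hχ hxχ)]
  | allE t ht _ ih => exact allE t ht (ih hΔ)
  | exI t ht _ ih => exact exI t ht (ih hΔ)
  | @exE X Γ φ ψ x hx hφ hψ hΓ _ _ ih₁ ih₂ =>
    refine exE x hx hφ hψ ?_ (ih₁ hΔ)
      (Set.insert_union .. ▸ ih₂ fun χ hχ => (hΔ χ hχ).trans (by simp))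
    rintro χ (hχ | hχ)
    exacts [hΓ χ hχ, fun hxχ => hx (hΔ χ hχ hxχ)]
  | em φ h => exact Prv.em φ h

theorem mono {X : Finset ℕ} {Γ Γ' : Set (Fml F far R rar 0)} {φ : Fml F far R rar 0}
    (h : Prv em X Γ φ) (hΓ : Γ ⊆ Γ') (hΓ' : ∀ χ ∈ Γ', χ.fv ⊆ X) : Prv em X Γ' φ := by
  simpa [Set.union_eq_right.mpr hΓ] using h.weaken hΓ'

theorem cut {X : Finset ℕ} {Γ : Set (Fml F far R rar 0)} {χ ψ : Fml F far R rar 0}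
    (h : Prv em X (insert χ Γ) ψ) (hχ : Prv em X Γ χ) : Prv em X Γ ψ :=
  impE (impI h) hχ

theorem cut_of_finite {X : Finset ℕ} {Γ Δ : Set (Fml F far R rar 0)} (hΔ : Δ.Finite)
    {ψ : Fml F far R rar 0} (h : Prv em X (Γ ∪ Δ) ψ) (hprv : ∀ χ ∈ Δ, Prv em X Γ χ) :
    Prv em X Γ ψ := by
  induction Δ, hΔ using Set.Finite.induction_on generalizing ψ with
  | empty => simpa using h
  | @insert χ Δ _ _ ih =>
    refine impE (ih (impI ?_) fun χ' hχ' => hprv χ' (.inr hχ')) (hprv χ (.inl rfl))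
    rwa [Set.union_insert] at h

end Prv

theorem Fml.mem_fv_of_mem_fv_rename {f : ℕ → ℕ} (hf : Function.Injective f) {n : ℕ}
    {φ : Fml F far R rar n} {x : ℕ} (hx : f x ∈ (φ.substFv fun y => Tm.fvar (f y)).fv) :
    x ∈ φ.fv := by
  obtain ⟨y, hy, hxy⟩ := Fml.mem_fv_substFv hx
  rwa [hf hxy]

/-- Injectivity of the renaming keeps eigenvariables fresh. -/
theorem Prv.rename {em : Prop} {f : ℕ → ℕ} (hf : Function.Injective f) {X : Finset ℕ}
    {Γ : Set (Fml F far R rar 0)} {φ : Fml F far R rar 0} (h : Prv em X Γ φ) :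
    Prv em (X.image f) (Fml.substFv (fun x => .fvar (f x)) '' Γ)
      (φ.substFv fun x => .fvar (f x)) := by
  classical
  have hfX {X : Finset ℕ} {x : ℕ} (hx : x ∉ X) : f x ∉ X.image f := by
    simpa [hf.eq_iff] using hx
  have hfΓ {Γ : Set (Fml F far R rar 0)} {x : ℕ} (hΓ : ∀ χ ∈ Γ, x ∉ χ.fv) :
      ∀ χ ∈ Fml.substFv (fun x => .fvar (f x)) '' Γ, f x ∉ χ.fv := by
    rintro _ ⟨χ, hχ, rfl⟩ hxχ
    exact hΓ χ hχ (Fml.mem_fv_of_mem_fv_rename hf hxχ)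
  have hft {X : Finset ℕ} {t : Tm F far} (ht : t.fv ⊆ X) :
      (t.subst fun x => .fvar (f x)).fv ⊆ X.image f := fun y hy => by
    obtain ⟨x, hx, rfl⟩ := Tm.mem_fv_subst hy
    exact Finset.mem_image_of_mem f (ht hx)
  induction h with
  | ax h => exact .ax (Set.mem_image_of_mem _ h)
  | topI => exact .topI
  | botE _ ih => exact .botE ih
  | conjI _ _ ih₁ ih₂ => exact .conjI ih₁ ih₂
  | conjE1 _ ih => exact .conjE1 ih
  | conjE2 _ ih => exact .conjE2 ih
  | disjI i _ ih => exact .disjI i ih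
  | disjE _ _ ih ihs => exact .disjE ih fun i => by simpa [Set.image_insert_eq] using ihs i
  | impI _ ih => exact .impI (by simpa [Set.image_insert_eq] using ih)
  | impE _ _ ih₁ ih₂ => exact .impE ih₁ ih₂
  | allI x hx hφ hΓ _ ih =>
    refine .allI (f x) (hfX hx) (fun h => hφ (Fml.mem_fv_of_mem_fv_rename hf h)) (hfΓ hΓ) ?_
    simpa [Finset.image_insert, Fml.open0_substFv, Tm.subst] using ih
  | allE t ht _ ih => simpa [Fml.open0_substFv] using Prv.allE _ (hft ht) ih
  | exI t ht _ ih => exact .exI _ (hft ht) (by simpa [Fml.open0_substFv] using ih)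
  | exE x hx hφ hψ hΓ _ _ ih₁ ih₂ =>
    refine .exE (f x) (hfX hx) (fun h => hφ (Fml.mem_fv_of_mem_fv_rename hf h))
      (fun h => hψ (Fml.mem_fv_of_mem_fv_rename hf h)) (hfΓ hΓ) ih₁ ?_
    simpa [Finset.image_insert, Set.image_insert_eq, Fml.open0_substFv, Tm.subst] using ih₂
  | em φ h =>
    convert Prv.em (φ.substFv fun x => .fvar (f x)) h using 1
    simp only [Fml.substFv, Fml.disj.injEq, heq_eq_eq, true_and]
    funext b
    cases b <;> rfl

theorem fv_append_fvar_subset {m k : ℕ} {θ : Fin m → Tm F far} {ys : Fin k → ℕ} {S : Set ℕ}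
    (hθ : ∀ i, (θ i).fv ⊆ S) (hys : ∀ j, ys j ∈ S) :
    ∀ i, (Fin.append θ (fun j => .fvar (ys j)) i).fv ⊆ S :=
  Fin.addCases (fun i => by simpa using hθ i) fun j => by simpa [Tm.fv] using hys j

theorem fv_snoc_subset {n : ℕ} {ρ : Fin n → Tm F far} {t : Tm F far} {X : Set ℕ}
    (hρ : ∀ i, (ρ i).fv ⊆ X) (ht : t.fv ⊆ X) :
    ∀ i, (Fin.snoc (α := fun _ => Tm F far) ρ t i).fv ⊆ X :=
  Fin.lastCases (by simpa using ht) fun i => by simpa using hρ i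

theorem image_univ_eq_insert_image_init {α : Type*} [DecidableEq α] {k : ℕ}
    (f : Fin (k + 1) → α) :
    Finset.univ.image f = insert (f (Fin.last k)) (Finset.univ.image (Fin.init f)) := by
  ext
  simp [Fin.exists_fin_succ', Fin.init, eq_comm, or_comm]

namespace Prv

variable {em : Prop}

theorem allsE {X : Finset ℕ} {Γ : Set (Fml F far R rar 0)} {m : ℕ} {φ : Fml F far R rar m}
    {ι : Fin m → Tm F far} (hι : ∀ i, (ι i).fv ⊆ X) (h : Prv em X Γ (Fml.alls m φ)) :
    Prv em X Γ (φ.bsubst fun i => (ι i).toTmc) := by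
  induction m with
  | zero => simpa [show (fun i : Fin 0 => ((ι i).toTmc : Tmc F far 0)) = .bvar from
      funext fun i => i.elim0, Fml.alls] using h
  | succ m ih =>
    have h' := allE _ (hι (Fin.last m)) (ih (φ := .all φ) (ι := Fin.init ι) (fun i => hι _) h)
    rwa [Fml.open0_bsubst_extendB, Fin.snoc_init_self] at h'

theorem exE_bsubst {X : Finset ℕ} {Γ : Set (Fml F far R rar 0)} {ψ : Fml F far R rar 0} {n : ℕ}
    {θ : Fin n → Tm F far} {φ : Fml F far R rar (n + 1)} {y : ℕ} (hy : y ∉ X)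
    (hθ : ∀ i, (θ i).fv ⊆ X) (hφ : φ.fv ⊆ X) (hΓ : ∀ χ ∈ Γ, χ.fv ⊆ X) (hψ : ψ.fv ⊆ X)
    (h : Prv em X Γ ((Fml.ex φ).bsubst fun i => (θ i).toTmc))
    (hcont : Prv em (insert y X)
      (insert (φ.bsubst fun i => (Fin.snoc (α := fun _ => Tm F far) θ (.fvar y) i).toTmc) Γ) ψ) :
    Prv em X Γ ψ := by
  have hex : ((Fml.ex φ).bsubst fun i => ((θ i).toTmc : Tmc F far 0)).fv ⊆ X :=
    Fml.fv_bsubst_subset hφ (by simpa using hθ)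
  refine exE y hy (fun h => hy (hex h)) (fun h => hy (hψ h)) (fun χ hχ h => hy (hΓ χ hχ h)) h ?_
  rwa [Fml.open0_bsubst_extendB]

/-- The eigenvariables `ys` are prescribed, rather than chosen, so that they can be the fresh
variables of `Cond.extend`. -/
theorem exsE {X : Finset ℕ} {Γ : Set (Fml F far R rar 0)} {ψ : Fml F far R rar 0} {m : ℕ}
    {θ : Fin m → Tm F far} {k : ℕ} {φ : Fml F far R rar (m + k)} {ys : Fin k → ℕ}
    (hys : Function.Injective ys) (hysX : ∀ j, ys j ∉ X) (hθ : ∀ i, (θ i).fv ⊆ X)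
    (hφ : φ.fv ⊆ X) (hΓ : ∀ χ ∈ Γ, χ.fv ⊆ X) (hψ : ψ.fv ⊆ X)
    (h : Prv em X Γ ((Fml.exs k φ).bsubst fun i => (θ i).toTmc))
    (hcont : Prv em (X ∪ Finset.univ.image ys)
      (insert (φ.bsubst fun i => (Fin.append θ (fun j => .fvar (ys j)) i).toTmc) Γ) ψ) :
    Prv em X Γ ψ := by
  classical
  induction k with
  | zero =>
    have happ : Fin.append θ (fun j : Fin 0 => Tm.fvar (ys j)) = θ :=
      funext fun i => Fin.append_left θ _ i
    exact cut (by simpa [happ, Fml.exs] using hcont) h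
  | succ k ih =>
    set y := ys (Fin.last k)
    set Y := X ∪ Finset.univ.image (Fin.init ys)
    set θ' : Fin (m + k) → Tm F far := Fin.append θ fun j => .fvar (Fin.init ys j)
    have hY : X ∪ Finset.univ.image ys = insert y Y := by
      rw [image_univ_eq_insert_image_init, Finset.union_insert]
    have hXY : (X : Set ℕ) ⊆ Y := by simp [Y]
    have hYZ : (Y : Set ℕ) ⊆ ↑(insert y Y) := by simp
    have hθ' : ∀ i, (θ' i).fv ⊆ Y :=
      fv_append_fvar_subset (fun i => (hθ i).trans hXY) fun j => by simp [Y]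
    have hexF : ((Fml.ex φ).bsubst fun i => ((θ' i).toTmc : Tmc F far 0)).fv ⊆ Y :=
      Fml.fv_bsubst_subset (hφ.trans hXY) (by simpa using hθ')
    have happ : Fin.snoc (α := fun _ => Tm F far) θ' (.fvar y) =
        Fin.append θ fun j => .fvar (ys j) := by
      rw [← Fin.append_snoc]
      exact congrArg _ (Fin.snoc_init_self (α := fun _ => Tm F far) fun j => .fvar (ys j))
    refine ih (φ := .ex φ) (ys := Fin.init ys) (hys.comp (Fin.castSucc_injective k))
      (fun j => hysX _) hφ h ?_
    refine exE_bsubst (θ := θ') (y := y) ?_ hθ' (hφ.trans hXY) ?_ (hψ.trans hXY)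
      (.ax (Set.mem_insert _ _)) ?_
    · simp [y, Fin.init, hysX, hys.eq_iff, Fin.castSucc_ne_last]
    · rintro χ (rfl | hχ)
      exacts [hexF, (hΓ χ hχ).trans hXY]
    · rw [happ, ← hY]
      refine hcont.mono (Set.insert_subset_insert (Set.subset_insert _ _)) ?_
      rw [hY]
      rintro χ (rfl | rfl | hχ)
      · refine Fml.fv_bsubst_subset (hφ.trans (hXY.trans hYZ)) fun i => ?_
        rw [Tm.fv_toTmc]
        exact fv_append_fvar_subset (ys := ys) (fun i => (hθ i).trans (hXY.trans hYZ))
          (fun j => by simp [← hY]) i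
      · exact hexF.trans hYZ
      · exact (hΓ χ hχ).trans (hXY.trans hYZ)

theorem listConj_bsubst_iff {X : Finset ℕ} {Γ : Set (Fml F far R rar 0)} {m : ℕ}
    {θ : Fin m → Tm F far} {l : List (CAtom F far R rar m)} :
    Prv em X Γ ((listConj l).bsubst fun i => (θ i).toTmc) ↔
      ∀ a ∈ l, Prv em X Γ (atomF (a.inst θ)) := by
  induction l with
  | nil => exact iff_of_true topI (by simp)
  | cons a l ih =>
    rw [List.forall_mem_cons, ← ih, ← CAtom.atomF_inst]
    exact ⟨fun h => ⟨conjE1 h, conjE2 h⟩, fun h => conjI h.1 h.2⟩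

end Prv

theorem Atom.subst_congr {σ σ' : ℕ → Tm F far} {a : Atom F far R rar}
    (h : ∀ x ∈ a.fv, σ x = σ' x) : a.subst σ = a.subst σ' := by
  simp only [Atom.subst, Sigma.mk.injEq, heq_eq_eq, true_and]
  exact funext fun i => Tm.subst_congr fun x hx => h x (Set.mem_iUnion_of_mem i hx)

theorem Mor.of_subset {mc : MC} {D C : Cond F far R rar} (hX : C.X ⊆ D.X) (hA : C.A ⊆ D.A) :
    Mor mc D C Tm.fvar where
  fvsub x hx := by simpa [Tm.fv] using hX hx
  atoms a ha := by
    simpa [Atom.subst] using hA ha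
  cls := by
    cases mc
    · exact ⟨fun x _ => ⟨x, rfl⟩, fun _ _ _ _ h => Tm.fvar.inj h⟩
    · exact fun x _ => ⟨x, rfl⟩
    · trivial

theorem IsIsoMor.refl (C : Cond F far R rar) : IsIsoMor C C Tm.fvar :=
  ⟨.of_subset le_rfl le_rfl, Tm.fvar, .of_subset le_rfl le_rfl, fun _ _ => rfl, fun _ _ => rfl⟩

theorem Mor.exists_injOn_fvar {D C : Cond F far R rar} {σ : ℕ → Tm F far} (h : Mor .rn D C σ) :
    ∃ f : ℕ → ℕ, Set.InjOn f C.X ∧ ∀ x ∈ C.X, σ x = .fvar (f x) := by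
  have hvar : ∀ x, ∃ y, x ∈ C.X → σ x = .fvar y := fun x => by
    by_cases hx : x ∈ C.X
    · exact (h.cls.1 x hx).imp fun _ hy _ => hy
    · exact ⟨0, fun h => absurd h hx⟩
  choose f hf using hvar
  refine ⟨f, fun x hx y hy hxy => h.cls.2 hx hy ?_, hf⟩
  rw [hf x hx, hf y hy, hxy]

theorem exists_injective_eqOn (S : Finset ℕ) (f : ℕ → ℕ) (hf : Set.InjOn f S) :
    ∃ g : ℕ → ℕ, Function.Injective g ∧ Set.EqOn g f S := by
  classical
  set M := (S.image f).sup id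
  refine ⟨fun x => if x ∈ S then f x else M + 1 + x, fun x y hxy => ?_,
    fun x hx => if_pos hx⟩
  have hle : ∀ x ∈ S, f x ≤ M := fun x hx =>
    Finset.le_sup (f := id) (Finset.mem_image_of_mem f hx)
  by_cases hx : x ∈ S <;> by_cases hy : y ∈ S <;> simp only [hx, hy, if_true, if_false] at hxy
  · exact hf hx hy hxy
  · have := hle x hx; omega
  · have := hle y hy; omega
  · omega

theorem IsIsoMor.exists_injective_rename {D C : Cond F far R rar} {σ : ℕ → Tm F far}
    (h : IsIsoMor D C σ) :
    ∃ g : ℕ → ℕ, Function.Injective g ∧ D.X.image g = C.X ∧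
      (∀ x ∈ C.X, (σ x).subst (fun y => .fvar (g y)) = .fvar x) ∧
      ∀ a ∈ D.A, a.subst (fun y => .fvar (g y)) ∈ C.A := by
  classical
  obtain ⟨hσ, τ, hτ, hστ, -⟩ := h
  obtain ⟨f, hf, hτf⟩ := hτ.exists_injOn_fvar
  obtain ⟨g, hg, hgf⟩ := exists_injective_eqOn D.X f hf
  have hgτ : ∀ y ∈ D.X, Tm.fvar (g y) = τ y := fun y hy => by rw [hgf hy, hτf y hy]
  have hσg : ∀ x ∈ C.X, (σ x).subst (fun y => .fvar (g y)) = .fvar x := fun x hx => by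
    rw [← hστ x hx]
    exact Tm.subst_congr fun y hy => hgτ y (hσ.fvsub x hx hy)
  refine ⟨g, hg, ?_, hσg, fun a ha => ?_⟩
  · ext x
    simp only [Finset.mem_image]
    constructor
    · rintro ⟨y, hy, rfl⟩
      simpa [← hgτ y hy, Tm.fv] using hτ.fvsub y hy
    · intro hx
      obtain ⟨y, hy⟩ := hσ.cls.1 x hx
      have hyD : y ∈ D.X := by simpa [hy, Tm.fv] using hσ.fvsub x hx
      exact ⟨y, hyD, by simpa [hy, Tm.subst] using hσg x hx⟩
  · rw [Atom.subst_congr fun y hy => hgτ y (D.wf a ha hy)]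
    exact hτ.atoms a ha

theorem Cov.fv_subset {T : Set (CohAx F far R rar)} {C : Cond F far R rar}
    {U : Sink F far R rar} (h : Cov T C U) {p : Cond F far R rar × (ℕ → Tm F far)}
    (hp : p ∈ U) : ∀ x ∈ C.X, (p.2 x).fv ⊆ p.1.X := by
  induction h with
  | iso h =>
    rw [Set.mem_singleton_iff.mp hp]
    exact h.1.fvsub
  | step _ _ _ _ _ _ _ ih =>
    obtain ⟨i, hi⟩ := Set.mem_iUnion.mp hp
    exact fun x hx => ih i hi x (Finset.mem_union_left _ hx)

theorem Cov.fv_subst_subset {T : Set (CohAx F far R rar)} {C : Cond F far R rar}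
    {U : Sink F far R rar} (h : Cov T C U) {p : Cond F far R rar × (ℕ → Tm F far)}
    (hp : p ∈ U) {t : Tm F far} (ht : t.fv ⊆ C.X) : (t.subst p.2).fv ⊆ p.1.X := fun _ hy => by
  obtain ⟨x, hx, hxy⟩ := Tm.mem_fv_subst hy
  exact h.fv_subset hp x (ht hx) hxy

theorem freshVar_notMem (C : Cond F far R rar) (j : ℕ) : freshVar C j ∉ C.X := fun h => by
  have := Finset.le_sup (f := id) h
  simp only [id_eq, freshVar] at this
  omega

theorem freshVar_injective (C : Cond F far R rar) : Function.Injective (freshVar C) :=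
  fun _ _ h => by simpa [freshVar] using h

section Extend

variable {em : Prop} {T : Set (CohAx F far R rar)} (C : Cond F far R rar) {m k : ℕ}
  (ι : Fin m → Tm F far) (hι : ∀ i, (ι i).fv ⊆ ↑C.X) (ats : List (CAtom F far R rar (m + k)))
  (hats : ∀ a ∈ ats, ∀ i, (a.2 i).noFvar)

theorem Cond.ctx_extend :
    (C.extend ι hι ats hats).ctx T = C.ctx T ∪
      atomF '' (CAtom.inst (Fin.append ι fun j : Fin k => .fvar (freshVar C j)) ''
        {a | a ∈ ats}) := by
  simp only [Cond.ctx, Cond.extend, Set.image_union, Set.union_assoc]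

theorem Cond.prv_of_prv_extend {Γ : Set (Fml F far R rar 0)} (hΓ : ∀ χ ∈ Γ, χ.fv ⊆ C.X)
    (hctx : C.ctx T ⊆ Γ) {ψ : Fml F far R rar 0} (hψ : ψ.fv ⊆ C.X)
    (hex : Prv em C.X Γ ((Fml.exs k (listConj ats)).bsubst fun i => (ι i).toTmc))
    (h : Prv em (C.extend ι hι ats hats).X ((C.extend ι hι ats hats).ctx T) ψ) :
    Prv em C.X Γ ψ := by
  set E := C.extend ι hι ats hats
  have hEX : (C.X : Set ℕ) ⊆ E.X := Finset.coe_subset.mpr Finset.subset_union_left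
  have hfresh : ∀ j : Fin k, freshVar C j ∈ (E.X : Set ℕ) := fun j => by simp [E, Cond.extend]
  refine Prv.exsE (ys := fun j => freshVar C j)
    ((freshVar_injective C).comp Fin.val_injective) (fun j => freshVar_notMem C j) hι
    (by simp [fv_listConj hats]) hΓ hψ hex ?_
  refine Prv.cut_of_finite ((ats.finite_toSet.image
    (CAtom.inst (Fin.append ι fun j : Fin k => .fvar (freshVar C j)))).image atomF)
    (h.mono ?_ ?_) ?_
  · rw [Cond.ctx_extend]
    exact Set.union_subset_union_left _ (hctx.trans (Set.subset_insert _ _))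
  · rintro χ ((rfl | hχ) | hχ)
    · refine Fml.fv_bsubst_subset (by simp [fv_listConj hats]) fun i => ?_
      rw [Tm.fv_toTmc]
      exact fv_append_fvar_subset (fun i => (hι i).trans hEX) hfresh i
    · exact (hΓ χ hχ).trans hEX
    · exact Cond.fv_subset_of_mem_ctx (T := T) (C := E) (by rw [Cond.ctx_extend]; exact .inr hχ)
  · rintro _ ⟨_, ⟨b, hb, rfl⟩, rfl⟩
    exact Prv.listConj_bsubst_iff.mp (.ax (Set.mem_insert _ _)) b hb

end Extend

/-- Local character of provability. -/
theorem Cov.prv_of_forall_mem {em : Prop} {T : Set (CohAx F far R rar)} {C : Cond F far R rar}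
    {U : Sink F far R rar} (hcov : Cov T C U) {ψ : Fml F far R rar 0} (hψ : ψ.fv ⊆ C.X)
    (h : ∀ p ∈ U, Prv em p.1.X (p.1.ctx T) (ψ.substFv p.2)) : Prv em C.X (C.ctx T) ψ := by
  induction hcov with
  | iso hiso =>
    obtain ⟨g, hg, himg, hσg, hA⟩ := hiso.exists_injective_rename
    have hprv := (h _ rfl).rename hg
    rw [himg, Fml.substFv_substFv, Fml.substFv_congr (σ' := Tm.fvar) fun x hx => hσg x (hψ hx),
      Fml.substFv_fvar] at hprv
    refine hprv.mono ?_ fun χ hχ => Cond.fv_subset_of_mem_ctx hχ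
    rintro _ ⟨χ, ⟨ax, hax, rfl⟩ | ⟨a, ha, rfl⟩, rfl⟩
    · exact .inl ⟨ax, hax, Fml.substFv_of_fv_eq_empty ax.fv_toFml _ |>.symm⟩
    · exact .inr ⟨_, hA a ha, (atomF_substFv _ a).symm⟩
  | @step C ax hax ι hι hhyp U hU ih =>
    have hax' : Prv em C.X (C.ctx T) ax.toFml := .ax (.inl ⟨ax, hax, rfl⟩)
    have hinst := hax'.allsE hι
    have hhyp' : Prv em C.X (C.ctx T) ((listConj ax.hyp).bsubst fun i => (ι i).toTmc) :=
      Prv.listConj_bsubst_iff.mpr fun a ha => .ax (.inr ⟨_, hhyp a ha, rfl⟩)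
    refine .disjE (.impE hinst hhyp') fun i =>
      C.prv_of_prv_extend ι hι _ _ ?_ (Set.subset_insert _ _) hψ (.ax (Set.mem_insert _ _))
        (ih i (hψ.trans (by simp [Cond.extend])) fun p hp => h p (Set.mem_iUnion_of_mem i hp))
    rintro χ (rfl | hχ)
    · refine Fml.fv_bsubst_subset ?_ (by simpa using hι)
      rw [Fml.fv_exs, fv_listConj (ax.conclClosed _ (List.get_mem _ i))]
      exact Set.empty_subset _
    · exact Cond.fv_subset_of_mem_ctx hχ

def Cond.addVar (C : Cond F far R rar) (x : ℕ) : Cond F far R rar :=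
  ⟨insert x C.X, C.A, C.finA, fun a ha => (C.wf a ha).trans (by simp)⟩

def Cond.addAtom (C : Cond F far R rar) (a : Atom F far R rar) (ha : a.fv ⊆ C.X) :
    Cond F far R rar :=
  ⟨C.X, insert a C.A, C.finA.insert a, by
    rintro b (rfl | hb)
    exacts [ha, C.wf b hb]⟩

section Completeness

variable {em : Prop} {mc : MC} {T : Set (CohAx F far R rar)}

theorem Forces.imp_of_subset {n : ℕ} {C D : Cond F far R rar} {σ : ℕ → Tm F far}
    {ρ : Fin n → Tm F far} {φ ψ : Fml F far R rar n} (hX : C.X ⊆ D.X) (hA : C.A ⊆ D.A)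
    (h : Forces mc (Cov T) C σ ρ (.imp φ ψ)) (hφ : Forces mc (Cov T) D σ ρ φ) :
    Forces mc (Cov T) D σ ρ ψ := by
  simpa using h D _ (.of_subset hX hA) (by simpa using hφ)

theorem Forces.all_of_subset {n : ℕ} {C D : Cond F far R rar} {σ : ℕ → Tm F far}
    {ρ : Fin n → Tm F far} {φ : Fml F far R rar (n + 1)} (hX : C.X ⊆ D.X) (hA : C.A ⊆ D.A)
    (h : Forces mc (Cov T) C σ ρ (.all φ)) {t : Tm F far} (ht : t.fv ⊆ D.X) :
    Forces mc (Cov T) D σ (Fin.snoc ρ t) φ := by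
  simpa using h D _ (.of_subset hX hA) t ht

theorem Forces.atom_addAtom {n : ℕ} {C : Cond F far R rar} {σ : ℕ → Tm F far}
    {ρ : Fin n → Tm F far} {r : R} {ts : Fin (rar r) → Tmc F far n}
    (ha : Atom.fv ⟨r, fun i => (ts i).eval σ ρ⟩ ⊆ C.X) :
    Forces mc (Cov T) (C.addAtom ⟨r, fun i => (ts i).eval σ ρ⟩ ha) σ ρ (.atom r ts) :=
  ⟨_, .iso (.refl _), fun p hp => by
    rw [Set.mem_singleton_iff.mp hp]
    simp [Cond.addAtom]⟩

variable (em mc T) in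
def ForcingComplete {n : ℕ} (φ : Fml F far R rar n) : Prop :=
  ∀ (C : Cond F far R rar) (σ : ℕ → Tm F far) (ρ : Fin n → Tm F far),
    (∀ y ∈ φ.fv, (σ y).fv ⊆ C.X) → (∀ i, (ρ i).fv ⊆ C.X) →
    Forces mc (Cov T) C σ ρ φ → Prv em C.X (C.ctx T) (φ.inst σ ρ)

namespace ForcingComplete

variable {n : ℕ}

theorem atom (r : R) (ts : Fin (rar r) → Tmc F far n) :
    ForcingComplete em mc T (.atom r ts) := fun C σ ρ hσ hρ ⟨U, hU, hmem⟩ =>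
  hU.prv_of_forall_mem (Fml.fv_inst_subset hσ hρ) fun p hp => by
    rw [Fml.inst_atom, atomF_substFv]
    exact .ax (.inr ⟨_, hmem p hp, rfl⟩)

theorem top : ForcingComplete (n := n) em mc T .top := fun _ _ _ _ _ _ => .topI

theorem bot : ForcingComplete (n := n) em mc T .bot := fun _ _ _ hσ hρ h =>
  Cov.prv_of_forall_mem h (Fml.fv_inst_subset hσ hρ) fun _ hp => absurd hp id

theorem conj {φ ψ : Fml F far R rar n} (hφ : ForcingComplete em mc T φ)
    (hψ : ForcingComplete em mc T ψ) : ForcingComplete em mc T (.conj φ ψ) :=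
  fun C σ ρ hσ hρ h => .conjI (hφ C σ ρ (fun y hy => hσ y (.inl hy)) hρ h.1)
    (hψ C σ ρ (fun y hy => hσ y (.inr hy)) hρ h.2)

theorem disj {I : Type} {f : I → Fml F far R rar n} (hf : ∀ i, ForcingComplete em mc T (f i)) :
    ForcingComplete em mc T (.disj I f) := fun C σ ρ hσ hρ ⟨U, hU, hforce⟩ =>
  hU.prv_of_forall_mem (Fml.fv_inst_subset hσ hρ) fun p hp => by
    obtain ⟨i, hi⟩ := hforce p hp
    rw [Fml.inst_substFv]
    exact .disjI i (hf i _ _ _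
      (fun y hy => hU.fv_subst_subset hp (hσ y (Set.mem_iUnion_of_mem i hy)))
      (fun j => hU.fv_subst_subset hp (hρ j)) hi)

theorem ex {φ : Fml F far R rar (n + 1)} (hφ : ForcingComplete em mc T φ) :
    ForcingComplete em mc T (.ex φ) := fun C σ ρ hσ hρ ⟨U, hU, hforce⟩ =>
  hU.prv_of_forall_mem (Fml.fv_inst_subset hσ hρ) fun p hp => by
    obtain ⟨t, ht, hi⟩ := hforce p hp
    rw [Fml.inst_substFv]
    refine .exI t ht ?_
    rw [Fml.open0_bsubst_extendB]
    exact hφ _ _ _ (fun y hy => hU.fv_subst_subset hp (hσ y hy))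
      (fv_snoc_subset (fun j => hU.fv_subst_subset hp (hρ j)) ht) hi

theorem all {φ : Fml F far R rar (n + 1)} (hφ : ForcingComplete em mc T φ) :
    ForcingComplete em mc T (.all φ) := fun C σ ρ hσ hρ h => by
  set x := freshVar C 0
  have hx : x ∉ C.X := freshVar_notMem C 0
  have hCD : (C.X : Set ℕ) ⊆ (C.addVar x).X := by simp [Cond.addVar]
  have hxD : (Tm.fvar x : Tm F far).fv ⊆ (C.addVar x).X := by simp [Cond.addVar, Tm.fv]
  refine .allI x hx (fun h => hx (Fml.fv_inst_subset hσ hρ h))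
    (fun χ hχ h => hx (Cond.fv_subset_of_mem_ctx hχ h)) ?_
  rw [Fml.open0_bsubst_extendB]
  exact hφ (C.addVar x) σ _ (fun y hy => (hσ y hy).trans hCD)
    (fv_snoc_subset (fun j => (hρ j).trans hCD) hxD)
    (h.all_of_subset (D := C.addVar x) (Finset.subset_insert _ _) le_rfl hxD)

theorem impAtom {r : R} {ts : Fin (rar r) → Tmc F far n} {φ : Fml F far R rar n}
    (hφ : ForcingComplete em mc T φ) : ForcingComplete em mc T (.imp (.atom r ts) φ) :=
  fun C σ ρ hσ hρ h => by
    have ha := Fml.fv_inst_subset (φ := .atom r ts) (fun y hy => hσ y (.inl hy)) hρ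
    rw [Fml.inst_atom, fv_atomF] at ha
    have hprv := hφ (C.addAtom _ ha) σ ρ (fun y hy => hσ y (.inr hy)) hρ
      (h.imp_of_subset (C := C) le_rfl (Set.subset_insert _ _) (.atom_addAtom ha))
    refine .impI (?_ : Prv em C.X (insert ((Fml.atom r ts).inst σ ρ) (C.ctx T)) (φ.inst σ ρ))
    rwa [Fml.inst_atom, Cond.ctx, ← Set.union_insert, ← Set.image_insert_eq]

theorem impTop {φ : Fml F far R rar n} (hφ : ForcingComplete em mc T φ) :
    ForcingComplete em mc T (.imp .top φ) := fun C σ ρ hσ hρ h => by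
  have hprv := hφ C σ ρ (fun y hy => hσ y (.inr hy)) hρ (h.imp_of_subset le_rfl le_rfl trivial)
  refine .impI (hprv.mono (Set.subset_insert _ _) ?_)
  rintro χ (rfl | hχ)
  exacts [by simp [Fml.substFv, Fml.bsubst, Fml.fv], Cond.fv_subset_of_mem_ctx hχ]

theorem impBot {φ : Fml F far R rar n} : ForcingComplete em mc T (.imp .bot φ) :=
  fun _ _ _ _ _ _ => .impI (.botE (.ax (Set.mem_insert _ _)))

end ForcingComplete

theorem GGI.forcingComplete {n : ℕ} {φ : Fml F far R rar n} (hφ : GGI φ) :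
    ForcingComplete em mc T φ := by
  induction hφ with
  | atom => exact .atom _ _
  | top => exact .top
  | bot => exact .bot
  | conj _ _ ih₁ ih₂ => exact ih₁.conj ih₂
  | disj _ ih => exact .disj ih
  | ex _ ih => exact ih.ex
  | all _ ih => exact ih.all
  | impAtom _ ih => exact ih.impAtom
  | impTop _ ih => exact ih.impTop
  | impBot _ => exact .impBot

end Completeness

theorem completeness_for_generalized_geometric_implications :
    (∀ (mc : MC) (T : Set (CohAx F far R rar)) (φ : Fml F far R rar 0), GGI φ →
      ∀ (C : Cond F far R rar) (ρ : ℕ → Tm F far),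
        (∀ y ∈ Fml.fv φ, (ρ y).fv ⊆ ↑C.X) →
        Forces mc (Cov T) C ρ Fin.elim0 φ →
        Prv False C.X (CohAx.toFml '' T ∪ atomF '' C.A) (Fml.substFv ρ φ)) ∧
    (∀ (mc : MC) (T : Set (CohAx F far R rar)) (φ : Fml F far R rar 0), GGI φ →
      Fml.fv φ = ∅ →
      Forces mc (Cov T) (emptyCond (F := F) (far := far) (R := R) (rar := rar))
        Tm.fvar Fin.elim0 φ →
      Prv False ∅ (CohAx.toFml '' T) φ) := by
  refine ⟨fun mc T φ hφ C ρ hρ h => ?_, fun mc T φ hφ hfv h => ?_⟩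
  · simpa [Fml.inst_elim0, Cond.ctx] using
      hφ.forcingComplete (em := False) C ρ Fin.elim0 hρ (fun i => i.elim0) h
  · simpa [Fml.inst_elim0, Cond.ctx, emptyCond] using
      hφ.forcingComplete (em := False) emptyCond Tm.fvar Fin.elim0 (by simp [hfv])
        (fun i => i.elim0) h

end CoherentForcing
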